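/- arXiv:1806.11128 — 3 statements merged into one kernel-verified Lean document; each statement's English description precedes it below -/
import Mathlib

section
/- Consider n bins with nonnegative weights w_1, ..., w_n summing to W, and X independent random attempts (X a positive integer), where for every bin i each attempt targets bin i with probability at least 1/X. Let S be the sum of the weights w_i over those bins i that are targeted by at least one of the X attempts. Then the expected uncollected weight satisfies E[W - S] ≤ W/e. -/
open MeasureTheory ProbabilityTheory

/-!
A bin is missed by all `X` attempts with probability `∏ⱼ (1 - pⱼ) ≤ exp (-∑ⱼ pⱼ) ≤ exp (-1)`,
by independence, `1 - p ≤ exp (-p)` and `∑ⱼ pⱼ ≥ X · (1/X) = 1`. Linearity of expectation over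
the bins then bounds the expected uncollected weight by `W / e`.
-/

theorem prod_one_sub_le_exp_neg_sum {ι : Type*} (s : Finset ι) (p : ι → ℝ)
    (hp : ∀ i ∈ s, p i ≤ 1) : ∏ i ∈ s, (1 - p i) ≤ Real.exp (-∑ i ∈ s, p i) := by
  rw [← Finset.sum_neg_distrib, Real.exp_sum]
  exact Finset.prod_le_prod (fun i hi => sub_nonneg.2 (hp i hi))
    fun i _ => by linarith [Real.add_one_le_exp (-p i)]

theorem ProbabilityTheory.iIndepFun.measureReal_forall_ne {Ω ι β : Type*} [MeasurableSpace Ω]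
    {μ : Measure Ω} [IsProbabilityMeasure μ] [Fintype ι]
    [MeasurableSpace β] [MeasurableSingletonClass β]
    {T : ι → Ω → β} (hmeas : ∀ j, Measurable (T j)) (hindep : iIndepFun T μ) (b : β) :
    μ.real {ω | ∀ j, T j ω ≠ b} = ∏ j, (1 - μ.real {ω | T j ω = b}) := by
  have hset : {ω | ∀ j, T j ω ≠ b} = ⋂ j, T j ⁻¹' {b}ᶜ := by ext; simp
  rw [hset, measureReal_def, hindep.meas_iInter fun j => ⟨{b}ᶜ, .compl (.singleton b), rfl⟩,
    ENNReal.toReal_prod]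
  exact Finset.prod_congr rfl fun j _ =>
    probReal_compl_eq_one_sub (hmeas j (.singleton b))

theorem integral_sum_filter_eq_sum_measureReal_mul {Ω α : Type*} [MeasurableSpace Ω]
    {μ : Measure Ω} [IsFiniteMeasure μ] [Fintype α] (p : α → Ω → Prop)
    [∀ i ω, Decidable (p i ω)] (hp : ∀ i, MeasurableSet {ω | p i ω}) (w : α → ℝ) :
    ∫ ω, ∑ i ∈ Finset.univ.filter (fun i => p i ω), w i ∂μ = ∑ i, μ.real {ω | p i ω} * w i := by
  have hind : ∀ ω, ∑ i ∈ Finset.univ.filter (fun i => p i ω), w i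
      = ∑ i, {ω | p i ω}.indicator (fun _ => w i) ω := by
    intro ω
    simp only [Finset.sum_filter, Set.indicator_apply, Set.mem_ofPred_eq]
  simp_rw [hind]
  rw [integral_finsetSum _ fun i _ => (integrable_const (w i)).indicator (hp i)]
  exact Finset.sum_congr rfl fun i _ => by rw [integral_indicator_const _ (hp i), smul_eq_mul]

/-- Weighted balls-and-bins lemma (expectation form): `n` bins with nonnegative
weights `w i` summing to `W`, and `X` independent random attempts `T j : Ω → Fin n`
(`X` a positive integer), each attempt targeting each bin with probability at least
`1/X`.  If `S ω` is the total weight of the bins targeted by at least one attempt,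
then the expected uncollected weight satisfies `E[W - S] ≤ W / e`. -/
theorem balls_and_bins_expectation {Ω : Type*} [MeasurableSpace Ω]
    (μ : Measure Ω) [IsProbabilityMeasure μ]
    (n X : ℕ) (hX : 0 < X)
    (w : Fin n → ℝ) (hw : ∀ i, 0 ≤ w i)
    (W : ℝ) (hW : W = ∑ i, w i)
    (T : Fin X → Ω → Fin n)
    (hmeas : ∀ j, Measurable (T j))
    (hindep : iIndepFun T μ)
    (hprob : ∀ i j, (1 : ℝ) / X ≤ (μ {ω | T j ω = i}).toReal)
    (S : Ω → ℝ)
    (hS : ∀ ω, S ω = ∑ i ∈ Finset.univ.filter (fun i => ∃ j, T j ω = i), w i) :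
    ∫ ω, (W - S ω) ∂μ ≤ W / Real.exp 1 := by
  have huncollected :
      ∀ ω, W - S ω = ∑ i ∈ Finset.univ.filter (fun i => ∀ j, T j ω ≠ i), w i := by
    intro ω
    rw [hW, hS, ← Finset.sum_filter_add_sum_filter_not Finset.univ (fun i => ∃ j, T j ω = i)]
    simp
  have hmissed_meas : ∀ i, MeasurableSet {ω | ∀ j, T j ω ≠ i} := fun i => by
    simp_rw [Set.ofPred_forall]
    exact .iInter fun j => (hmeas j (.singleton i)).compl
  have hmissed : ∀ i, μ.real {ω | ∀ j, T j ω ≠ i} ≤ Real.exp (-1) := by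
    intro i
    have hsum : 1 ≤ ∑ j, μ.real {ω | T j ω = i} := calc
      (1 : ℝ) = ∑ _j : Fin X, (1 : ℝ) / X := by simp [hX.ne']
      _ ≤ ∑ j, μ.real {ω | T j ω = i} := Finset.sum_le_sum fun j _ => hprob i j
    rw [hindep.measureReal_forall_ne hmeas]
    refine (prod_one_sub_le_exp_neg_sum _ _ fun j _ => measureReal_le_one).trans ?_
    exact Real.exp_le_exp.2 (neg_le_neg hsum)
  calc ∫ ω, (W - S ω) ∂μ = ∑ i, μ.real {ω | ∀ j, T j ω ≠ i} * w i := by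
        simp_rw [huncollected]
        exact integral_sum_filter_eq_sum_measureReal_mul _ hmissed_meas w
    _ ≤ ∑ i, Real.exp (-1) * w i :=
        Finset.sum_le_sum fun i _ => mul_le_mul_of_nonneg_right (hmissed i) (hw i)
    _ = W / Real.exp 1 := by rw [← Finset.mul_sum, ← hW, Real.exp_neg, inv_mul_eq_div]
end

section
/- Consider n bins with nonnegative weights w_1, ..., w_n summing to W > 0, and X independent random attempts (X a positive integer), where for every bin i each attempt targets bin i with probability at least 1/X. Let S be the sum of the weights w_i over those bins i that are targeted by at least one of the X attempts. Then for every β with 0 < β < 1, the probability that S < βW is strictly less than 1/((1-β)e). -/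
/-!
The weight left uncollected is `∑ i, w i · 1[no attempt hits i]`. By independence each bin is
missed with probability at most `(1 - 1/X)^X < 1/e`, so the expected uncollected weight is
below `W / e`, and Markov's inequality at level `(1 - β) W` gives the tail bound.
-/

open MeasureTheory ProbabilityTheory

theorem one_sub_inv_pow_lt_exp_neg_one {X : ℕ} (hX : 0 < X) :
    (1 - 1 / (X : ℝ)) ^ X < Real.exp (-1) := by
  have hXR : (0 : ℝ) < X := by exact_mod_cast hX
  have hq0 : 0 ≤ 1 - 1 / (X : ℝ) := by
    rw [sub_nonneg, div_le_one hXR]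
    exact_mod_cast hX
  calc (1 - 1 / (X : ℝ)) ^ X < Real.exp (-(1 / X)) ^ X := by
        gcongr
        linarith [Real.add_one_lt_exp (neg_ne_zero.mpr (one_div_pos.mpr hXR).ne')]
    _ = Real.exp (-1) := by
        rw [← Real.exp_nat_mul]
        field_simp

theorem sum_sub_sum_filter_eq_sum_indicator {Ω ι : Type*} [Fintype ι] (w : ι → ℝ)
    (P : ι → Ω → Prop) [∀ i ω, Decidable (P i ω)] (ω : Ω) :
    ∑ i, w i - ∑ i ∈ Finset.univ.filter (fun i => P i ω), w i =
      ∑ i, {ω | ¬ P i ω}.indicator (fun _ => w i) ω := by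
  rw [← Finset.sum_filter_add_sum_filter_not Finset.univ (fun i => P i ω), add_sub_cancel_left,
    Finset.sum_filter]
  simp only [Set.indicator_apply, Set.mem_ofPred_eq]

section

variable {Ω ι : Type*} [MeasurableSpace Ω] {μ : Measure Ω} [Fintype ι]

theorem measureReal_forall_ne_le {α : Type*} [MeasurableSpace α] [MeasurableSingletonClass α]
    [IsProbabilityMeasure μ] {T : ι → Ω → α} (hmeas : ∀ j, Measurable (T j))
    (hindep : iIndepFun T μ) {b : α} {p : ℝ} (hp : ∀ j, p ≤ μ.real (T j ⁻¹' {b})) :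
    μ.real {ω | ∀ j, T j ω ≠ b} ≤ (1 - p) ^ Fintype.card ι := by
  have hmiss : {ω | ∀ j, T j ω ≠ b} = ⋂ j ∈ Finset.univ, T j ⁻¹' {b}ᶜ := by
    ext ω
    simp
  have hfactor : ∀ j, μ.real (T j ⁻¹' {b}ᶜ) ≤ 1 - p := fun j => by
    rw [Set.preimage_compl, probReal_compl_eq_one_sub (hmeas j (measurableSet_singleton b))]
    linarith [hp j]
  rw [hmiss, measureReal_def, hindep.measure_inter_preimage_eq_mul Finset.univ
    (fun _ _ => (measurableSet_singleton b).compl), ENNReal.toReal_prod, ← Finset.card_univ,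
    ← Finset.prod_const]
  exact Finset.prod_le_prod (fun _ _ => ENNReal.toReal_nonneg) fun j _ => hfactor j

theorem integral_sum_indicator_const_le [IsFiniteMeasure μ] {w : ι → ℝ} (hw : ∀ i, 0 ≤ w i)
    {A : ι → Set Ω} (hA : ∀ i, MeasurableSet (A i)) {r : ℝ} (hr : ∀ i, μ.real (A i) ≤ r) :
    ∫ ω, ∑ i, (A i).indicator (fun _ => w i) ω ∂μ ≤ (∑ i, w i) * r := by
  rw [integral_finsetSum _ fun i _ => (integrable_const (w i)).indicator (hA i),
    Finset.sum_mul]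
  refine Finset.sum_le_sum fun i _ => ?_
  rw [integral_indicator_const _ (hA i), smul_eq_mul, mul_comm]
  exact mul_le_mul_of_nonneg_left (hr i) (hw i)

theorem mul_measureReal_le_sum_indicator_const_le [IsFiniteMeasure μ] {w : ι → ℝ}
    (hw : ∀ i, 0 ≤ w i) {A : ι → Set Ω} (hA : ∀ i, MeasurableSet (A i)) {r : ℝ}
    (hr : ∀ i, μ.real (A i) ≤ r) (c : ℝ) :
    c * μ.real {ω | c ≤ ∑ i, (A i).indicator (fun _ => w i) ω} ≤ (∑ i, w i) * r := by
  refine (mul_meas_ge_le_integral_of_nonneg ?_ ?_ c).trans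
    (integral_sum_indicator_const_le hw hA hr)
  · exact Filter.Eventually.of_forall fun ω =>
      Finset.sum_nonneg fun i _ => Set.indicator_nonneg (fun _ _ => hw i) ω
  · exact integrable_finsetSum _ fun i _ => (integrable_const (w i)).indicator (hA i)

end

theorem balls_and_bins_tail_general {Ω : Type*} [MeasurableSpace Ω]
    (μ : Measure Ω) [IsProbabilityMeasure μ]
    (n X : ℕ) (hX : 0 < X)
    (w : Fin n → ℝ) (hw : ∀ i, 0 ≤ w i)
    (W : ℝ) (hW : W = ∑ i, w i) (hWpos : 0 < W)
    (T : Fin X → Ω → Fin n)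
    (hmeas : ∀ j, Measurable (T j))
    (hindep : iIndepFun T μ)
    (hprob : ∀ i j, (1 : ℝ) / X ≤ (μ {ω | T j ω = i}).toReal)
    (S : Ω → ℝ)
    (hS : ∀ ω, S ω = ∑ i ∈ Finset.univ.filter (fun i => ∃ j, T j ω = i), w i)
    (β : ℝ) (hβ1 : β < 1) :
    (μ {ω | S ω < β * W}).toReal < 1 / ((1 - β) * Real.exp 1) := by
  set U : Ω → ℝ := fun ω => ∑ i, {ω | ¬ ∃ j, T j ω = i}.indicator (fun _ => w i) ω
  have hU : ∀ ω, U ω = W - S ω := fun ω => by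
    rw [hW, hS]
    exact (sum_sub_sum_filter_eq_sum_indicator w (fun i ω => ∃ j, T j ω = i) ω).symm
  have hmiss : ∀ i, μ.real {ω | ¬ ∃ j, T j ω = i} ≤ (1 - 1 / X) ^ X := fun i => by
    simpa using measureReal_forall_ne_le hmeas hindep (hprob i)
  have hmiss_meas : ∀ i, MeasurableSet {ω | ¬ ∃ j, T j ω = i} := fun i => by measurability
  set c := (1 - β) * W with hc_def
  have hc : 0 < c := mul_pos (by linarith) hWpos
  have hsub : {ω | S ω < β * W} ⊆ {ω | c ≤ U ω} := fun ω hω => by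
    simp only [Set.mem_ofPred_eq, hU] at hω ⊢
    linarith
  have hmarkov : c * μ.real {ω | S ω < β * W} < W * Real.exp (-1) :=
    calc c * μ.real {ω | S ω < β * W}
        ≤ c * μ.real {ω | c ≤ U ω} := mul_le_mul_of_nonneg_left (measureReal_mono hsub) hc.le
      _ ≤ W * (1 - 1 / X) ^ X :=
        hW ▸ mul_measureReal_le_sum_indicator_const_le hw hmiss_meas hmiss c
      _ < W * Real.exp (-1) := by gcongr; exact one_sub_inv_pow_lt_exp_neg_one hX
  calc μ.real {ω | S ω < β * W} < W * Real.exp (-1) / c := (lt_div_iff₀' hc).mpr hmarkov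
    _ = 1 / ((1 - β) * Real.exp 1) := by
      rw [Real.exp_neg, hc_def]
      field_simp [(sub_pos.mpr hβ1).ne']

/-- Weighted balls-and-bins lemma (tail-bound form): with `n` bins of nonnegative
weights summing to `W > 0` and `X` independent attempts, each targeting each bin
with probability at least `1/X`, the collected weight `S` satisfies, for every
`0 < β < 1`, `Pr[S < β W] < 1 / ((1 - β) e)`. -/
theorem balls_and_bins_tail {Ω : Type*} [MeasurableSpace Ω]
    (μ : Measure Ω) [IsProbabilityMeasure μ]
    (n X : ℕ) (hX : 0 < X)
    (w : Fin n → ℝ) (hw : ∀ i, 0 ≤ w i)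
    (W : ℝ) (hW : W = ∑ i, w i) (hWpos : 0 < W)
    (T : Fin X → Ω → Fin n)
    (hmeas : ∀ j, Measurable (T j))
    (hindep : iIndepFun T μ)
    (hprob : ∀ i j, (1 : ℝ) / X ≤ (μ {ω | T j ω = i}).toReal)
    (S : Ω → ℝ)
    (hS : ∀ ω, S ω = ∑ i ∈ Finset.univ.filter (fun i => ∃ j, T j ω = i), w i)
    (β : ℝ) (hβ0 : 0 < β) (hβ1 : β < 1) :
    (μ {ω | S ω < β * W}).toReal < 1 / ((1 - β) * Real.exp 1) :=
  balls_and_bins_tail_general μ n X hX w hw W hW hWpos T hmeas hindep hprob S hS β hβ1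
end

section
/- Consider n bins with nonnegative weights w_1, ..., w_n summing to W > 0, and X independent random attempts (X a positive integer), where for every bin i each attempt targets bin i with probability at least 1/X. Let S be the sum of the weights w_i over those bins i that are targeted by at least one of the X attempts. Then the probability that S ≥ W/2 is at least 1 - 2/e, and in particular at least 1/4. -/
open MeasureTheory ProbabilityTheory

/-!
Instead of the collected weight `S` we bound the missed weight `W - S`, which is nonnegative, so
Markov's inequality applies to it. By independence a fixed bin is missed by all `X` attempts with
probability at most `(1 - 1/X)^X ≤ 1/e`, so the expected missed weight is at most `W/e`, and Markov
gives `Pr[W - S ≥ W/2] ≤ 2/e`. Finally `2/e < 3/4` because `e > 8/3`.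
-/

open Finset

section MissProbability

variable {Ω ι α : Type*} [MeasurableSpace Ω] {μ : Measure Ω} [IsProbabilityMeasure μ]
  [Fintype ι] [MeasurableSpace α] [MeasurableSingletonClass α] {T : ι → Ω → α}

lemma measurableSet_forall_ne (hT : ∀ j, Measurable (T j)) (a : α) :
    MeasurableSet {ω | ∀ j, T j ω ≠ a} := by
  simp only [Set.ofPred_forall]
  exact .iInter fun j => (hT j (measurableSet_singleton a)).compl

lemma measureReal_forall_ne_le_exp (hT : ∀ j, Measurable (T j)) (hindep : iIndepFun T μ)
    {a : α} {p : ℝ} (hp : ∀ j, p ≤ μ.real {ω | T j ω = a}) :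
    μ.real {ω | ∀ j, T j ω ≠ a} ≤ Real.exp (-(p * Fintype.card ι)) := by
  have hmiss_one : ∀ j, μ.real {ω | T j ω ≠ a} ≤ Real.exp (-p) := fun j => calc
    μ.real {ω | T j ω ≠ a} = 1 - μ.real {ω | T j ω = a} :=
      probReal_compl_eq_one_sub (hT j (measurableSet_singleton a))
    _ ≤ 1 - p := by linarith [hp j]
    _ ≤ Real.exp (-p) := Real.one_sub_le_exp_neg p
  calc μ.real {ω | ∀ j, T j ω ≠ a} = ∏ j, μ.real {ω | T j ω ≠ a} := by
        simp only [Measure.real, Set.ofPred_forall, ← ENNReal.toReal_prod]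
        congr 1
        exact hindep.meas_iInter fun j => ⟨{a}ᶜ, (measurableSet_singleton a).compl, rfl⟩
    _ ≤ ∏ _j : ι, Real.exp (-p) :=
        prod_le_prod (fun j _ => measureReal_nonneg) fun j _ => hmiss_one j
    _ = Real.exp (-(p * Fintype.card ι)) := by
        rw [prod_const, card_univ, ← Real.exp_nat_mul]
        ring_nf

end MissProbability

section MissedWeight

variable {Ω ι α : Type*} [Fintype α]

noncomputable def missedWeight (w : α → ℝ) (T : ι → Ω → α) (ω : Ω) : ℝ :=
  ∑ a, {ω | ∀ j, T j ω ≠ a}.indicator (fun _ => w a) ω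

lemma sum_filter_exists_add_missedWeight (w : α → ℝ) (T : ι → Ω → α) (ω : Ω)
    [DecidablePred fun a => ∃ j, T j ω = a] :
    ∑ a ∈ univ.filter (fun a => ∃ j, T j ω = a), w a + missedWeight w T ω = ∑ a, w a := by
  have hmissed : missedWeight w T ω = ∑ a ∈ univ.filter (fun a => ¬∃ j, T j ω = a), w a := by
    rw [missedWeight, sum_filter]
    refine sum_congr rfl fun a _ => ?_
    simp only [Set.indicator_apply, Set.mem_ofPred_eq, ← not_exists]
  rw [hmissed, sum_filter_add_sum_filter_not]

lemma missedWeight_nonneg {w : α → ℝ} (hw : ∀ a, 0 ≤ w a) (T : ι → Ω → α) (ω : Ω) :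
    0 ≤ missedWeight w T ω :=
  sum_nonneg fun a _ => Set.indicator_nonneg (fun _ _ => hw a) ω

variable [Fintype ι] [MeasurableSpace Ω] {μ : Measure Ω} [IsProbabilityMeasure μ]
  [MeasurableSpace α] [MeasurableSingletonClass α] {T : ι → Ω → α}

lemma integrable_missedWeight (hT : ∀ j, Measurable (T j)) (w : α → ℝ) :
    Integrable (missedWeight w T) μ :=
  integrable_finsetSum _ fun a _ =>
    (integrable_const (w a)).indicator (measurableSet_forall_ne hT a)

lemma integral_missedWeight (hT : ∀ j, Measurable (T j)) (w : α → ℝ) :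
    ∫ ω, missedWeight w T ω ∂μ = ∑ a, μ.real {ω | ∀ j, T j ω ≠ a} * w a := by
  simp only [missedWeight]
  rw [integral_finsetSum _ fun a _ =>
    (integrable_const (w a)).indicator (measurableSet_forall_ne hT a)]
  simp [integral_indicator_const _ (measurableSet_forall_ne hT _)]

lemma integral_missedWeight_le_exp (hT : ∀ j, Measurable (T j)) (hindep : iIndepFun T μ)
    {w : α → ℝ} (hw : ∀ a, 0 ≤ w a) {p : ℝ} (hp : ∀ a j, p ≤ μ.real {ω | T j ω = a}) :
    ∫ ω, missedWeight w T ω ∂μ ≤ (∑ a, w a) * Real.exp (-(p * Fintype.card ι)) := by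
  rw [integral_missedWeight hT, sum_mul]
  refine sum_le_sum fun a _ => ?_
  rw [mul_comm (w a)]
  exact mul_le_mul_of_nonneg_right (measureReal_forall_ne_le_exp hT hindep (hp a)) (hw a)

end MissedWeight

lemma one_sub_integral_div_le_measureReal_lt {Ω : Type*} [MeasurableSpace Ω] {μ : Measure Ω}
    [IsProbabilityMeasure μ] {f : Ω → ℝ} (hf : 0 ≤ f) (hfi : Integrable f μ) {c : ℝ} (hc : 0 < c) :
    1 - (∫ ω, f ω ∂μ) / c ≤ μ.real {ω | f ω < c} := by
  have hmarkov : μ.real {ω | c ≤ f ω} ≤ (∫ ω, f ω ∂μ) / c := by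
    rw [le_div_iff₀ hc, mul_comm]
    exact mul_meas_ge_le_integral_of_nonneg (.of_forall hf) hfi c
  have hcompl : μ.real {ω | f ω < c} = 1 - μ.real {ω | c ≤ f ω} := by
    have hnull : NullMeasurableSet {ω | c ≤ f ω} μ :=
      hfi.aemeasurable.nullMeasurable measurableSet_Ici
    rw [← probReal_compl_eq_one_sub₀ hnull]
    simp only [Set.compl_ofPred, not_le]
  linarith

lemma one_fourth_le_one_sub_two_div_exp_one : (1 : ℝ) / 4 ≤ 1 - 2 / Real.exp 1 := by
  have := Real.exp_one_gt_d9
  rw [le_sub_comm, div_le_iff₀ (Real.exp_pos 1)]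
  linarith

/-- Weighted balls-and-bins, instantiated with `β = 1/2`: with `n` bins of
nonnegative weights summing to `W > 0` and `X` independent attempts, each
targeting each bin with probability at least `1/X`, the collected weight `S`
satisfies `Pr[S ≥ W/2] ≥ 1 - 2/e`, and in particular `Pr[S ≥ W/2] ≥ 1/4`. -/
theorem balls_and_bins_half {Ω : Type*} [MeasurableSpace Ω]
    (μ : Measure Ω) [IsProbabilityMeasure μ]
    (n X : ℕ) (hX : 0 < X)
    (w : Fin n → ℝ) (hw : ∀ i, 0 ≤ w i)
    (W : ℝ) (hW : W = ∑ i, w i) (hWpos : 0 < W)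
    (T : Fin X → Ω → Fin n)
    (hmeas : ∀ j, Measurable (T j))
    (hindep : iIndepFun T μ)
    (hprob : ∀ i j, (1 : ℝ) / X ≤ (μ {ω | T j ω = i}).toReal)
    (S : Ω → ℝ)
    (hS : ∀ ω, S ω = ∑ i ∈ Finset.univ.filter (fun i => ∃ j, T j ω = i), w i) :
    1 - 2 / Real.exp 1 ≤ (μ {ω | W / 2 ≤ S ω}).toReal ∧
    (1 : ℝ) / 4 ≤ (μ {ω | W / 2 ≤ S ω}).toReal := by
  have hint : ∫ ω, missedWeight w T ω ∂μ ≤ W * Real.exp (-1) := by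
    have hexp : -(1 / (X : ℝ) * Fintype.card (Fin X)) = -1 := by
      rw [Fintype.card_fin, one_div_mul_cancel (by positivity)]
    simpa only [← hW, hexp] using integral_missedWeight_le_exp hmeas hindep hw hprob
  have hlt_subset : {ω | missedWeight w T ω < W / 2} ⊆ {ω | W / 2 ≤ S ω} := fun ω hω => by
    have := sum_filter_exists_add_missedWeight w T ω
    rw [← hS, ← hW] at this
    simp only [Set.mem_ofPred_eq] at hω ⊢
    linarith
  have hmain : 1 - 2 / Real.exp 1 ≤ μ.real {ω | W / 2 ≤ S ω} := calc
    1 - 2 / Real.exp 1 ≤ 1 - (∫ ω, missedWeight w T ω ∂μ) / (W / 2) := by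
      have : W * Real.exp (-1) / (W / 2) = 2 / Real.exp 1 := by
        rw [Real.exp_neg]; field_simp
      rw [← this]
      gcongr
    _ ≤ μ.real {ω | missedWeight w T ω < W / 2} :=
      one_sub_integral_div_le_measureReal_lt (missedWeight_nonneg hw T)
        (integrable_missedWeight hmeas w) (by positivity)
    _ ≤ μ.real {ω | W / 2 ≤ S ω} := measureReal_mono hlt_subset
  exact ⟨hmain, one_fourth_le_one_sub_two_div_exp_one.trans hmain⟩
end
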